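/- arXiv:1202.4473 — 2 statements merged into one kernel-verified Lean document; each statement's English description precedes it below -/
import Mathlib

section
/- Let F_1 ⊂ ... ⊂ F_n be a filtration and X_1,...,X_n real random variables with X_t measurable with respect to F_t, E[X_t | F_{t-1}] = 0, |X_t| ≤ b for some b > 0, and set V_n = Σ_{t=1}^n E[X_t² | F_{t-1}]. Then for any ε > 0 and V > 0, P[Σ_{t=1}^n X_t ≥ ε and V_n ≤ V] ≤ exp(-ε² / (2V + 2bε/3)). -/
/-!
Freedman's exponential supermartingale argument. With `ψ(u) = eᵘ - 1 - u`, comparing power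
series gives `exp (l x) ≤ 1 + l x + ψ(l b) x² / b²` for `|x| ≤ b`; since `E[X_t | F_{t-1}] = 0`
this yields `E[exp (l X_t) | F_{t-1}] ≤ exp (ψ(l b) / b² · E[X_t² | F_{t-1}])`, so
`exp (l S_n - ψ(l b) V_n / b²)` has expectation at most `1`. On the event `S_n ≥ ε, V_n ≤ V` this
exponent is at least `l ε - ψ(l b) V / b²`, and Markov's inequality together with
`ψ(u) ≤ u² / (2 (1 - u/3))` at `l = ε / (V + b ε / 3)` gives the bound.
-/

open MeasureTheory ProbabilityTheory Finset Real
open scoped Nat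

namespace Real

theorem exp_sub_one_sub_eq_tsum (y : ℝ) :
    exp y - 1 - y = ∑' k : ℕ, y ^ (k + 2) / (k + 2)! := by
  rw [exp_eq_exp_ℝ, NormedSpace.exp_eq_tsum_div]
  beta_reduce
  rw [← (summable_pow_div_factorial y).sum_add_tsum_nat_add 2]
  simp [Finset.sum_range_succ]
  ring

theorem summable_pow_add_two_div_factorial (y : ℝ) :
    Summable fun k : ℕ => y ^ (k + 2) / (k + 2)! :=
  (summable_nat_add_iff 2).2 (summable_pow_div_factorial y)

theorem exp_le_one_add_add_sq_div_sq_mul {y z : ℝ} (hz : 0 < z) (hyz : |y| ≤ z) :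
    exp y ≤ 1 + y + y ^ 2 / z ^ 2 * (exp z - 1 - z) := by
  suffices exp y - 1 - y ≤ y ^ 2 / z ^ 2 * (exp z - 1 - z) by linarith
  rw [exp_sub_one_sub_eq_tsum, exp_sub_one_sub_eq_tsum, ← tsum_mul_left]
  refine (summable_pow_add_two_div_factorial y).tsum_le_tsum (fun k => ?_)
    ((summable_pow_add_two_div_factorial z).mul_left _)
  have hpow : y ^ (k + 2) ≤ y ^ 2 / z ^ 2 * z ^ (k + 2) :=
    calc y ^ (k + 2) ≤ |y| ^ 2 * |y| ^ k := by
          rw [← pow_add, add_comm, ← abs_pow]; exact le_abs_self _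
      _ ≤ y ^ 2 * z ^ k := by rw [sq_abs]; gcongr
      _ = y ^ 2 / z ^ 2 * z ^ (k + 2) := by field_simp; ring
  rw [mul_div_assoc']
  gcongr

theorem exp_sub_one_sub_le_sq_div {z : ℝ} (h0 : 0 ≤ z) (h3 : z < 3) :
    exp z - 1 - z ≤ z ^ 2 / (2 * (1 - z / 3)) := by
  have hr : z / 3 < 1 := by linarith
  have hterm (k : ℕ) : z ^ (k + 2) / (k + 2)! ≤ z ^ 2 / 2 * (z / 3) ^ k := by
    have hfac : (2 * 3 ^ k : ℝ) ≤ (k + 2)! := by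
      have := @Nat.factorial_mul_pow_le_factorial 2 k
      rw [add_comm 2 k] at this
      exact_mod_cast this
    rw [div_pow, div_le_iff₀ (by positivity)]
    calc z ^ (k + 2) = z ^ 2 / 2 * (z ^ k / 3 ^ k) * (2 * 3 ^ k) := by field_simp; ring
      _ ≤ _ := by gcongr
  calc exp z - 1 - z ≤ ∑' k : ℕ, z ^ 2 / 2 * (z / 3) ^ k := by
        rw [exp_sub_one_sub_eq_tsum]
        exact (summable_pow_add_two_div_factorial z).tsum_le_tsum hterm
          ((summable_geometric_of_lt_one (by positivity) hr).mul_left _)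
    _ = z ^ 2 / (2 * (1 - z / 3)) := by
        rw [tsum_mul_left, tsum_geometric_of_lt_one (by positivity) hr]
        field_simp

end Real

/-- `ψ(l b) / b²`: for `l > 0`, the least `c` with `exp (l x) ≤ 1 + l x + c x²` on `|x| ≤ b`. -/
noncomputable def bernsteinCoeff (l b : ℝ) : ℝ := (exp (l * b) - l * b - 1) / b ^ 2

theorem bernsteinCoeff_nonneg (l b : ℝ) : 0 ≤ bernsteinCoeff l b :=
  div_nonneg (by linarith [add_one_le_exp (l * b)]) (sq_nonneg b)

theorem exp_mul_le_one_add_mul_add_bernsteinCoeff_mul_sq {l b x : ℝ} (hl : 0 < l) (hb : 0 < b)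
    (hx : |x| ≤ b) : exp (l * x) ≤ 1 + l * x + bernsteinCoeff l b * x ^ 2 := by
  have hlx : |l * x| ≤ l * b := by rw [abs_mul, abs_of_pos hl]; gcongr
  calc exp (l * x) ≤ 1 + l * x + (l * x) ^ 2 / (l * b) ^ 2 * (exp (l * b) - 1 - l * b) :=
        exp_le_one_add_add_sq_div_sq_mul (by positivity) hlx
    _ = 1 + l * x + bernsteinCoeff l b * x ^ 2 := by
        unfold bernsteinCoeff; field_simp; ring

theorem bernsteinCoeff_mul_sub_le {b ε V : ℝ} (hb : 0 < b) (hε : 0 < ε) (hV : 0 < V) :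
    bernsteinCoeff (ε / (V + b * ε / 3)) b * V - ε / (V + b * ε / 3) * ε
      ≤ -ε ^ 2 / (2 * V + 2 * b * ε / 3) := by
  set D := V + b * ε / 3
  have hD : 0 < D := by positivity
  have hz3 : ε / D * b < 3 := by
    rw [div_mul_eq_mul_div, div_lt_iff₀ hD]; simp only [D]; nlinarith
  have hψ := exp_sub_one_sub_le_sq_div (by positivity) hz3
  have h1 : 1 - ε / D * b / 3 = V / D := by field_simp; ring
  rw [h1] at hψ
  have hcV : bernsteinCoeff (ε / D) b * V ≤ ε ^ 2 / (2 * D) := by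
    unfold bernsteinCoeff
    calc (exp (ε / D * b) - ε / D * b - 1) / b ^ 2 * V
        ≤ (ε / D * b) ^ 2 / (2 * (V / D)) / b ^ 2 * V := by gcongr; linarith
      _ = ε ^ 2 / (2 * D) := by field_simp
  have h2 : -ε ^ 2 / (2 * V + 2 * b * ε / 3) = ε ^ 2 / (2 * D) - ε / D * ε := by
    field_simp; ring
  linarith

section Probability

variable {Ω : Type*} {m0 : MeasurableSpace Ω} {μ : Measure Ω}

theorem integrable_exp_of_ae_le [IsFiniteMeasure μ] {f : Ω → ℝ} (hf : AEStronglyMeasurable f μ)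
    {B : ℝ} (hB : ∀ᵐ ω ∂μ, f ω ≤ B) : Integrable (fun ω => exp (f ω)) μ :=
  .of_bound (continuous_exp.comp_aestronglyMeasurable hf) (exp B) <| hB.mono fun ω h => by
    rw [norm_of_nonneg (exp_pos _).le]; exact exp_le_exp.2 h

theorem measureReal_le_exp_neg_of_integral_exp_le_one [IsFiniteMeasure μ] {Z : Ω → ℝ}
    (hZ : Integrable (fun ω => exp (Z ω)) μ) (h : ∫ ω, exp (Z ω) ∂μ ≤ 1) (a : ℝ) :
    μ.real {ω | a ≤ Z ω} ≤ exp (-a) := by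
  have := measure_ge_le_exp_mul_mgf (t := 1) a zero_le_one (by simpa using hZ)
  simp only [mgf, one_mul, neg_mul] at this
  exact this.trans (mul_le_of_le_one_right (exp_pos _).le h)

theorem condExp_exp_mul_le_exp_condExp_sq [IsFiniteMeasure μ] {m : MeasurableSpace Ω}
    (hm : m ≤ m0) {X : Ω → ℝ} (hX : MemLp X 2 μ) {l c : ℝ}
    (hquad : ∀ ω, exp (l * X ω) ≤ 1 + l * X ω + c * X ω ^ 2) (hmean : μ[X | m] =ᵐ[μ] 0) :
    μ[fun ω => exp (l * X ω) | m] ≤ᵐ[μ] fun ω => exp (c * μ[fun ω => X ω ^ 2 | m] ω) := by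
  have hX1 : Integrable X μ := hX.integrable one_le_two
  have hX2 : Integrable (fun ω => X ω ^ 2) μ := hX.integrable_sq
  have hquadint : Integrable (fun ω => 1 + l * X ω + c * X ω ^ 2) μ :=
    ((integrable_const 1).add (hX1.const_mul l)).add (hX2.const_mul c)
  have hexpint : Integrable (fun ω => exp (l * X ω)) μ :=
    hquadint.mono' (continuous_exp.comp_aestronglyMeasurable (hX.1.const_mul l))
      (ae_of_all _ fun ω => by rw [norm_of_nonneg (exp_pos _).le]; exact hquad ω)
  have hlin : μ[fun ω => 1 + l * X ω + c * X ω ^ 2 | m]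
      =ᵐ[μ] fun ω => 1 + c * μ[fun ω => X ω ^ 2 | m] ω := by
    have hsplit : (fun ω => 1 + l * X ω + c * X ω ^ 2)
        = ((fun _ => 1) + l • X) + c • fun ω => X ω ^ 2 := rfl
    rw [hsplit]
    filter_upwards [condExp_add ((integrable_const 1).add (hX1.smul l)) (hX2.smul c) m,
      condExp_add (integrable_const 1) (hX1.smul l) m, condExp_smul l X m,
      condExp_smul c (fun ω => X ω ^ 2) m, hmean] with ω h1 h2 h3 h4 h5
    simp only [h1, Pi.add_apply, h2, h3, h4, condExp_const hm, Pi.smul_apply, h5]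
    simp
  filter_upwards [condExp_mono (m := m) hexpint hquadint (ae_of_all _ hquad), hlin] with ω h1 h2
  rw [h2] at h1
  linarith [add_one_le_exp (c * μ[fun ω => X ω ^ 2 | m] ω)]

section ExpSupermartingale

variable {F : ℕ → MeasurableSpace Ω} {Y A : ℕ → Ω → ℝ} {B : ℝ} {n : ℕ}

theorem measurable_sum_Icc_sub (hFmono : Monotone F)
    (hY : ∀ t ∈ Icc 1 n, Measurable[F t] (Y t))
    (hA : ∀ t ∈ Icc 1 n, Measurable[F (t - 1)] (A t)) :
    Measurable[F n] fun ω => ∑ t ∈ Icc 1 n, (Y t ω - A t ω) :=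
  Finset.measurable_sum _ fun t ht =>
    ((hY t ht).mono (hFmono (mem_Icc.1 ht).2) le_rfl).sub
      ((hA t ht).mono (hFmono ((Nat.sub_le t 1).trans (mem_Icc.1 ht).2)) le_rfl)

theorem integrable_exp_sum_Icc_sub [IsFiniteMeasure μ] (hFmono : Monotone F)
    (hFle : ∀ t, F t ≤ m0) (hY : ∀ t ∈ Icc 1 n, Measurable[F t] (Y t))
    (hA : ∀ t ∈ Icc 1 n, Measurable[F (t - 1)] (A t)) (hYB : ∀ t ∈ Icc 1 n, ∀ ω, Y t ω ≤ B)
    (hA0 : ∀ t ∈ Icc 1 n, 0 ≤ᵐ[μ] A t) :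
    Integrable (fun ω => exp (∑ t ∈ Icc 1 n, (Y t ω - A t ω))) μ := by
  refine integrable_exp_of_ae_le
    ((measurable_sum_Icc_sub hFmono hY hA).mono (hFle n) le_rfl).aestronglyMeasurable
    (B := n * B) ?_
  filter_upwards [(Filter.eventually_all_finset _).2 hA0] with ω hω
  calc ∑ t ∈ Icc 1 n, (Y t ω - A t ω) ≤ ∑ t ∈ Icc 1 n, B :=
        sum_le_sum fun t ht => by linarith [hYB t ht ω, show (0 : ℝ) ≤ A t ω from hω t ht]
    _ = n * B := by simp

theorem integral_exp_sum_Icc_sub_le_one [IsProbabilityMeasure μ] (hFmono : Monotone F)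
    (hFle : ∀ t, F t ≤ m0) (hY : ∀ t ∈ Icc 1 n, Measurable[F t] (Y t))
    (hA : ∀ t ∈ Icc 1 n, Measurable[F (t - 1)] (A t)) (hYB : ∀ t ∈ Icc 1 n, ∀ ω, Y t ω ≤ B)
    (hA0 : ∀ t ∈ Icc 1 n, 0 ≤ᵐ[μ] A t)
    (hstep : ∀ t ∈ Icc 1 n, μ[fun ω => exp (Y t ω) | F (t - 1)] ≤ᵐ[μ] fun ω => exp (A t ω)) :
    ∫ ω, exp (∑ t ∈ Icc 1 n, (Y t ω - A t ω)) ∂μ ≤ 1 := by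
  induction n with
  | zero => simp
  | succ n ih =>
    have hsub : Icc 1 n ⊆ Icc 1 (n + 1) := Icc_subset_Icc_right n.le_succ
    have hlast : n + 1 ∈ Icc 1 (n + 1) := by simp
    set f : Ω → ℝ := fun ω => exp (∑ t ∈ Icc 1 n, (Y t ω - A t ω) - A (n + 1) ω)
    set g : Ω → ℝ := fun ω => exp (Y (n + 1) ω)
    have hfg : (fun ω => exp (∑ t ∈ Icc 1 (n + 1), (Y t ω - A t ω))) = f * g := by
      ext ω
      simp only [f, g, Pi.mul_apply, ← exp_add, sum_Icc_succ_top (Nat.le_add_left 1 n)]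
      ring_nf
    have hf : StronglyMeasurable[F n] f :=
      (continuous_exp.measurable.comp ((measurable_sum_Icc_sub hFmono
        (fun t ht => hY t (hsub ht)) fun t ht => hA t (hsub ht)).sub
          (hA (n + 1) hlast))).stronglyMeasurable
    have hfg_int : Integrable (f * g) μ :=
      hfg ▸ integrable_exp_sum_Icc_sub hFmono hFle hY hA hYB hA0
    have hg_int : Integrable g μ :=
      integrable_exp_of_ae_le (((hY _ hlast).mono (hFle _) le_rfl).aestronglyMeasurable)
        (ae_of_all _ (hYB _ hlast))
    have hpull : μ[f * g | F n] =ᵐ[μ] f * μ[g | F n] :=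
      condExp_mul_of_stronglyMeasurable_left hf hfg_int hg_int
    have hprev : (fun ω => f ω * exp (A (n + 1) ω))
        = fun ω => exp (∑ t ∈ Icc 1 n, (Y t ω - A t ω)) := by
      ext ω; simp only [f, ← exp_add, sub_add_cancel]
    calc ∫ ω, exp (∑ t ∈ Icc 1 (n + 1), (Y t ω - A t ω)) ∂μ
        = ∫ ω, μ[f * g | F n] ω ∂μ := by rw [hfg, integral_condExp (hFle n)]
      _ = ∫ ω, (f * μ[g | F n]) ω ∂μ := integral_congr_ae hpull
      _ ≤ ∫ ω, f ω * exp (A (n + 1) ω) ∂μ := by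
          refine integral_mono_ae (integrable_condExp.congr hpull) ?_ ?_
          · rw [hprev]
            exact integrable_exp_sum_Icc_sub hFmono hFle (fun t ht => hY t (hsub ht))
              (fun t ht => hA t (hsub ht)) (fun t ht => hYB t (hsub ht)) fun t ht => hA0 t (hsub ht)
          · filter_upwards [hstep (n + 1) hlast] with ω hω
            exact mul_le_mul_of_nonneg_left hω (exp_pos _).le
      _ ≤ 1 := by
          rw [hprev]
          exact ih (fun t ht => hY t (hsub ht)) (fun t ht => hA t (hsub ht))
            (fun t ht => hYB t (hsub ht)) (fun t ht => hA0 t (hsub ht))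
            fun t ht => hstep t (hsub ht)

theorem integral_exp_mul_sum_sub_bernsteinCoeff_le_one [IsProbabilityMeasure μ]
    (hFmono : Monotone F) (hFle : ∀ t, F t ≤ m0) {X : ℕ → Ω → ℝ} {b l : ℝ} (hb : 0 < b)
    (hl : 0 < l) (hXmeas : ∀ t ∈ Icc 1 n, Measurable[F t] (X t))
    (hcond : ∀ t ∈ Icc 1 n, μ[X t | F (t - 1)] =ᵐ[μ] 0)
    (hXbdd : ∀ t ∈ Icc 1 n, ∀ ω, |X t ω| ≤ b) :
    let Z := fun ω => l * ∑ t ∈ Icc 1 n, X t ω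
      - bernsteinCoeff l b * ∑ t ∈ Icc 1 n, μ[fun ω' => X t ω' ^ 2 | F (t - 1)] ω
    Integrable (fun ω => exp (Z ω)) μ ∧ ∫ ω, exp (Z ω) ∂μ ≤ 1 := by
  set c := bernsteinCoeff l b
  have hstep (t : ℕ) (ht : t ∈ Icc 1 n) : μ[fun ω => exp (l * X t ω) | F (t - 1)]
      ≤ᵐ[μ] fun ω => exp (c * μ[fun ω' => X t ω' ^ 2 | F (t - 1)] ω) :=
    condExp_exp_mul_le_exp_condExp_sq (hFle _)
      (.of_bound ((hXmeas t ht).mono (hFle t) le_rfl).aestronglyMeasurable b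
        (ae_of_all _ fun ω => hXbdd t ht ω))
      (fun ω => exp_mul_le_one_add_mul_add_bernsteinCoeff_mul_sq hl hb (hXbdd t ht ω))
      (hcond t ht)
  have hY (t : ℕ) (ht : t ∈ Icc 1 n) : Measurable[F t] fun ω => l * X t ω :=
    (hXmeas t ht).const_mul l
  have hA (t : ℕ) (_ : t ∈ Icc 1 n) :
      Measurable[F (t - 1)] fun ω => c * μ[fun ω' => X t ω' ^ 2 | F (t - 1)] ω :=
    stronglyMeasurable_condExp.measurable.const_mul c
  have hYB (t : ℕ) (ht : t ∈ Icc 1 n) (ω : Ω) : l * X t ω ≤ l * b :=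
    mul_le_mul_of_nonneg_left (le_of_abs_le (hXbdd t ht ω)) hl.le
  have hA0 (t : ℕ) (_ : t ∈ Icc 1 n) :
      0 ≤ᵐ[μ] fun ω => c * μ[fun ω' => X t ω' ^ 2 | F (t - 1)] ω := by
    filter_upwards [condExp_nonneg (m := F (t - 1)) (μ := μ)
      (ae_of_all _ fun ω => sq_nonneg (X t ω))] with ω hω
    exact mul_nonneg (bernsteinCoeff_nonneg l b) hω
  have hint := integrable_exp_sum_Icc_sub hFmono hFle hY hA hYB hA0
  have hle := integral_exp_sum_Icc_sub_le_one hFmono hFle hY hA hYB hA0 hstep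
  simp only [sum_sub_distrib, ← mul_sum] at hint hle
  exact ⟨hint, hle⟩

end ExpSupermartingale

end Probability

theorem stmt_4 {Ω : Type*} [MeasureSpace Ω] [IsProbabilityMeasure (ℙ : Measure Ω)]
    (n : ℕ) (F : ℕ → MeasurableSpace Ω) (hFmono : Monotone F)
    (hFle : ∀ t, F t ≤ (MeasureSpace.toMeasurableSpace : MeasurableSpace Ω))
    (X : ℕ → Ω → ℝ) (b : ℝ) (hb : 0 < b)
    (hXmeas : ∀ t ∈ Finset.Icc 1 n, Measurable[F t] (X t))
    (hcond : ∀ t ∈ Finset.Icc 1 n, ℙ[X t | F (t - 1)] =ᵐ[ℙ] 0)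
    (hXbdd : ∀ t ∈ Finset.Icc 1 n, ∀ ω, |X t ω| ≤ b)
    (Vn : Ω → ℝ)
    (hVn : Vn = fun ω => ∑ t ∈ Finset.Icc 1 n, (ℙ[fun ω' => (X t ω') ^ 2 | F (t - 1)]) ω)
    (ε V : ℝ) (hε : 0 < ε) (hV : 0 < V) :
    (ℙ {ω | ε ≤ ∑ t ∈ Finset.Icc 1 n, X t ω ∧ Vn ω ≤ V}).toReal
      ≤ Real.exp (-ε ^ 2 / (2 * V + 2 * b * ε / 3)) := by
  subst hVn
  set l := ε / (V + b * ε / 3)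
  have hl : 0 < l := by positivity
  set c := bernsteinCoeff l b
  obtain ⟨hint, hle⟩ := integral_exp_mul_sum_sub_bernsteinCoeff_le_one hFmono hFle hb hl
    hXmeas hcond hXbdd
  calc (ℙ {ω | ε ≤ ∑ t ∈ Icc 1 n, X t ω
          ∧ ∑ t ∈ Icc 1 n, ℙ[fun ω' => X t ω' ^ 2 | F (t - 1)] ω ≤ V}).toReal
      ≤ (ℙ : Measure Ω).real {ω | l * ε - c * V ≤ l * ∑ t ∈ Icc 1 n, X t ω
          - c * ∑ t ∈ Icc 1 n, ℙ[fun ω' => X t ω' ^ 2 | F (t - 1)] ω} :=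
        measureReal_mono fun ω ⟨hS, hQ⟩ => sub_le_sub (mul_le_mul_of_nonneg_left hS hl.le)
          (mul_le_mul_of_nonneg_left hQ (bernsteinCoeff_nonneg l b))
    _ ≤ exp (-(l * ε - c * V)) := measureReal_le_exp_neg_of_integral_exp_le_one hint hle _
    _ ≤ exp (-ε ^ 2 / (2 * V + 2 * b * ε / 3)) :=
        exp_le_exp.2 (by linarith [bernsteinCoeff_mul_sub_le hb hε hV])
end

section
/- Let F_1 ⊂ ... ⊂ F_n be a filtration and X_1,...,X_n a martingale difference sequence (X_t is F_t-measurable, E[X_t|F_{t-1}] = 0) with |X_t| ≤ b. Let V_n = Σ_{t=1}^n E[X_t² | F_{t-1}] and δ > 0. Then with probability at least 1 - δ, Σ_{t=1}^n X_t ≤ √(4·V_n·log(n/δ) + 5·b²·log²(n/δ)). -/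
/-!
For `l ≥ 0` and `|x| ≤ b`, Bennett's bound `exp (l x) ≤ 1 + l x + ψ(l b) x² / b²`, where
`ψ u = exp u - 1 - u`, makes `exp (l Sₙ - ψ(l b) Vₙ / b²)` a supermartingale, so by Markov's
inequality `l Sₙ - ψ(l b) Vₙ / b² ≥ L` has probability at most `exp (-L) = δ / n` for
`L = log (n / δ)`. Split the range `0 ≤ Vₙ ≤ n b²` into the `n` buckets `[k b², (k + 1) b²]` and
use on bucket `k` the rate from Bernstein's bound `ψ λ ≤ λ² / (2 (1 - λ / 3))`: outside these
`n` events, `Sₙ ≤ √(4 Vₙ L + 5 b² L²)`. This needs `L ≥ 3/10`, which fails only for `n = 1`;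
there Markov's inequality for `X₁ + b ≥ 0` suffices.
-/

open MeasureTheory ProbabilityTheory Real Finset

lemma monotoneOn_Ici_of_hasDerivAt {f f' : ℝ → ℝ} {a : ℝ} (hf : ∀ t, HasDerivAt f (f' t) t)
    (hf' : ∀ t, a ≤ t → 0 ≤ f' t) : MonotoneOn f (Set.Ici a) :=
  monotoneOn_of_hasDerivWithinAt_nonneg (convex_Ici a)
    (fun t _ => (hf t).continuousAt.continuousWithinAt) (fun t _ => (hf t).hasDerivWithinAt)
    (fun t ht => hf' t (interior_subset ht))

noncomputable def expRem (u : ℝ) : ℝ := exp u - 1 - u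

lemma hasDerivAt_expRem (u : ℝ) : HasDerivAt expRem (exp u - 1) u :=
  ((hasDerivAt_exp u).sub_const 1).sub (hasDerivAt_id u)

lemma expRem_nonneg (u : ℝ) : 0 ≤ expRem u := by
  unfold expRem; linarith [add_one_le_exp u]

lemma expRem_le_sq_div_two {u : ℝ} (hu : u ≤ 0) : expRem u ≤ u ^ 2 / 2 := by
  have hd : ∀ t, HasDerivAt (fun t => expRem t - t ^ 2 / 2) (exp t - 1 - t) t := fun t =>
    ((hasDerivAt_expRem t).sub ((hasDerivAt_pow 2 t).div_const 2)).congr_deriv (by simp)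
  have := monotone_of_hasDerivAt_nonneg hd expRem_nonneg hu
  simp only [expRem, exp_zero] at this ⊢
  linarith

lemma sq_div_two_le_expRem {u : ℝ} (hu : 0 ≤ u) : u ^ 2 / 2 ≤ expRem u := by
  unfold expRem; linarith [quadratic_le_exp_of_nonneg hu]

lemma sub_two_mul_exp_add_add_two_nonneg {u : ℝ} (hu : 0 ≤ u) :
    0 ≤ (u - 2) * exp u + (u + 2) := by
  have hd : ∀ t, HasDerivAt (fun t => (t - 2) * exp t + (t + 2))
      (1 * exp t + (t - 2) * exp t + 1) t := fun t =>
    (((hasDerivAt_id t).sub_const 2).mul (hasDerivAt_exp t)).add ((hasDerivAt_id t).add_const 2)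
  have hd' : ∀ t, 0 ≤ t → 0 ≤ 1 * exp t + (t - 2) * exp t + 1 := fun t _ => by
    have h := one_sub_le_exp_neg t
    have : exp (-t) * exp t = 1 := by rw [← exp_add]; simp
    nlinarith [exp_pos t]
  simpa using monotoneOn_Ici_of_hasDerivAt hd hd' Set.self_mem_Ici (Set.mem_Ici.2 hu) hu

lemma expRem_div_sq_monotoneOn : MonotoneOn (fun u => expRem u / u ^ 2) (Set.Ioi 0) := by
  have hd : ∀ u : ℝ, 0 < u → HasDerivAt (fun u => expRem u / u ^ 2)
      (((exp u - 1) * u ^ 2 - expRem u * (2 * u)) / (u ^ 2) ^ 2) u := fun u hu =>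
    ((hasDerivAt_expRem u).div (hasDerivAt_pow 2 u) (pow_pos hu 2).ne').congr_deriv (by simp)
  refine monotoneOn_of_hasDerivWithinAt_nonneg (convex_Ioi 0)
    (f' := fun u => ((exp u - 1) * u ^ 2 - expRem u * (2 * u)) / (u ^ 2) ^ 2)
    (fun u hu => (hd u hu).continuousAt.continuousWithinAt) ?_ ?_ <;>
    rw [interior_Ioi] <;> intro u (hu : 0 < u)
  · exact (hd u hu).hasDerivWithinAt
  · have h := sub_two_mul_exp_add_add_two_nonneg hu.le
    apply div_nonneg _ (by positivity)
    unfold expRem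
    nlinarith

lemma expRem_mul_sq_le {u v : ℝ} (huv : u ≤ v) (hv : 0 < v) :
    v ^ 2 * expRem u ≤ u ^ 2 * expRem v := by
  rcases le_or_gt u 0 with hu | hu
  · have h1 := expRem_le_sq_div_two hu
    have h2 := sq_div_two_le_expRem hv.le
    nlinarith [sq_nonneg u, sq_nonneg v]
  · have := expRem_div_sq_monotoneOn hu hv huv
    rw [div_le_div_iff₀ (by positivity) (by positivity)] at this
    linarith

lemma exp_mul_le_one_add_add_expRem_mul_sq {l b x : ℝ} (hl : 0 ≤ l) (hb : 0 < b)
    (hx : |x| ≤ b) :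
    exp (l * x) ≤ 1 + l * x + expRem (l * b) / b ^ 2 * x ^ 2 := by
  rcases hl.eq_or_lt with rfl | hl
  · simp [expRem]
  have key := expRem_mul_sq_le (mul_le_mul_of_nonneg_left (le_of_abs_le hx) hl.le)
    (mul_pos hl hb)
  have : expRem (l * x) ≤ expRem (l * b) / b ^ 2 * x ^ 2 := by
    rw [div_mul_eq_mul_div, le_div_iff₀ (by positivity)]
    nlinarith [pow_pos hl 2]
  unfold expRem at this ⊢
  linarith

lemma one_sub_div_three_mul_expRem_le {v : ℝ} (hv : 0 ≤ v) :
    (1 - v / 3) * expRem v ≤ v ^ 2 / 2 := by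
  have hd : ∀ t, HasDerivAt (fun t => t ^ 2 / 2 - (1 - t / 3) * expRem t)
      (t - (-(1 / 3) * expRem t + (1 - t / 3) * (exp t - 1))) t := fun t =>
    (((hasDerivAt_pow 2 t).div_const 2).sub (((hasDerivAt_const t 1).sub
      ((hasDerivAt_id t).div_const 3)).mul (hasDerivAt_expRem t))).congr_deriv (by simp)
  have := monotoneOn_Ici_of_hasDerivAt hd (a := 0) (fun t ht => by
    have := sub_two_mul_exp_add_add_two_nonneg ht
    unfold expRem; nlinarith) Set.self_mem_Ici (Set.mem_Ici.2 hv) hv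
  simp only [expRem] at this ⊢
  norm_num at this
  linarith

lemma inv_one_add_sqrt_five_mul_le_exp_neg {L : ℝ} (hL0 : 0 ≤ L) (hL : L ≤ 1 / 2) :
    (1 + √5 * L)⁻¹ ≤ exp (-L) := by
  have h5 : 2 ≤ √5 := by rw [le_sqrt zero_le_two (by norm_num)]; norm_num
  have hexp : exp L ≤ 1 + √5 * L := by
    calc exp L ≤ 1 / (1 - L) := exp_bound_div_one_sub_of_interval hL0 (by linarith)
      _ ≤ 1 + 2 * L := by rw [div_le_iff₀ (by linarith)]; nlinarith
      _ ≤ 1 + √5 * L := by nlinarith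
  rw [exp_neg]
  exact inv_anti₀ (exp_pos L) hexp

-- The rate `s / (σ² + s / 3)` that Bernstein's bound suggests for a deviation
-- `s = √(4 k L + 5 L²)` with variance `σ² = k + 1`; on the bucket `k = 0` the rate `1` is used.
noncomputable def bucketRate (L : ℝ) (k : ℕ) : ℝ :=
  if k = 0 then 1 else √(4 * k * L + 5 * L ^ 2) / (k + 1 + √(4 * k * L + 5 * L ^ 2) / 3)

lemma bucketRate_pos {L : ℝ} (hL : 0 < L) (k : ℕ) : 0 < bucketRate L k := by
  unfold bucketRate
  split_ifs
  · exact one_pos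
  · positivity

lemma le_sub_expRem_one_mul {L U y : ℝ} (hL : 3 / 10 ≤ L) (hU0 : 0 ≤ U) (hU1 : U ≤ 1)
    (hy : √(4 * U * L + 5 * L ^ 2) ≤ y) : L ≤ y - expRem 1 * U := by
  have hc : 0 < expRem 1 ∧ expRem 1 < 0.72 := by
    unfold expRem; constructor <;> linarith [exp_one_gt_d9, exp_one_lt_d9]
  have hco : expRem 1 ^ 2 + 2 * expRem 1 * L - 4 * L ≤ 0 := by nlinarith
  have hsq : (expRem 1 * U + L) ^ 2 ≤ 4 * U * L + 5 * L ^ 2 := by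
    nlinarith [mul_le_mul_of_nonneg_left hU1 hU0, mul_nonneg hU0 (neg_nonneg.2 hco)]
  linarith [(le_abs_self _).trans ((abs_le_sqrt hsq).trans hy)]

lemma le_bucketRate_mul_sub_of_ne_zero {k : ℕ} (hk : k ≠ 0) {L U y : ℝ} (hL : 3 / 10 ≤ L)
    (hkU : k ≤ U) (hUk : U ≤ k + 1) (hy : √(4 * U * L + 5 * L ^ 2) ≤ y) :
    L ≤ bucketRate L k * y - expRem (bucketRate L k) * U := by
  have hK : (1 : ℝ) ≤ k := by exact_mod_cast Nat.one_le_iff_ne_zero.2 hk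
  set s := √(4 * k * L + 5 * L ^ 2) with hs_def
  set lam := bucketRate L k
  set D : ℝ := k + 1 + s / 3
  have hs2 : s ^ 2 = 4 * k * L + 5 * L ^ 2 := sq_sqrt (by positivity)
  have hs : 0 < s := sqrt_pos.2 (by positivity)
  have hD : 0 < D := by positivity
  have hlam : lam * D = s := by
    simp only [lam, bucketRate, if_neg hk]; exact div_mul_cancel₀ s hD.ne'
  have hlam0 : 0 < lam := by nlinarith
  have hψ : expRem lam * (k + 1) ≤ lam * s / 2 := by
    have : (1 - lam / 3) * D = k + 1 := by linear_combination (-1 / 3) * hlam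
    calc expRem lam * (k + 1) = (1 - lam / 3) * expRem lam * D := by rw [← this]; ring
      _ ≤ lam ^ 2 / 2 * D :=
        mul_le_mul_of_nonneg_right (one_sub_div_three_mul_expRem_le hlam0.le) hD.le
      _ = lam * s / 2 := by rw [← hlam]; ring
  have hsy : s ≤ y := (sqrt_le_sqrt (by nlinarith)).trans hy
  have hs_le : s ≤ 3 / 2 * (2 * k - 2 + 5 * L) := by
    rw [hs_def, sqrt_le_left (by nlinarith)]
    nlinarith
  have hL : L ≤ lam * s / 2 := by
    refine le_of_mul_le_mul_right ?_ (by positivity : 0 < 2 * D)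
    calc L * (2 * D) ≤ s ^ 2 := by
          nlinarith [mul_le_mul_of_nonneg_left hs_le (by positivity : 0 ≤ L),
            show D = k + 1 + s / 3 from rfl]
      _ = lam * s / 2 * (2 * D) := by rw [← hlam]; ring
  nlinarith [expRem_nonneg lam]

lemma le_bucketRate_mul_sub {k : ℕ} {L U y : ℝ} (hL : 3 / 10 ≤ L) (hkU : k ≤ U)
    (hUk : U ≤ k + 1) (hy : √(4 * U * L + 5 * L ^ 2) ≤ y) :
    L ≤ bucketRate L k * y - expRem (bucketRate L k) * U := by
  rcases eq_or_ne k 0 with rfl | hk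
  · simpa [bucketRate] using
      le_sub_expRem_one_mul hL (by simpa using hkU) (by simpa using hUk) hy
  · exact le_bucketRate_mul_sub_of_ne_zero hk hL hkU hUk hy

lemma exists_nat_le_le_add_one {n : ℕ} (hn : 0 < n) {U : ℝ} (hU0 : 0 ≤ U) (hUn : U ≤ n) :
    ∃ k < n, (k : ℝ) ≤ U ∧ U ≤ k + 1 := by
  rcases lt_or_ge ⌊U⌋₊ n with h | h
  · exact ⟨⌊U⌋₊, h, Nat.floor_le hU0, (Nat.lt_floor_add_one U).le⟩
  · refine ⟨n - 1, by omega, ?_, by rw [Nat.cast_sub hn, Nat.cast_one]; linarith⟩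
    calc ((n - 1 : ℕ) : ℝ) ≤ ⌊U⌋₊ := by exact_mod_cast (n.sub_le 1).trans h
      _ ≤ U := Nat.floor_le hU0

section ConditionalExpectation

variable {Ω : Type*} {m mΩ : MeasurableSpace Ω} {μ : Measure Ω}

lemma integral_mul_condExp (hm : m ≤ mΩ) [SigmaFinite (μ.trim hm)] {G Y : Ω → ℝ}
    (hG : StronglyMeasurable[m] G) (hGY : Integrable (fun ω => G ω * Y ω) μ)
    (hY : Integrable Y μ) : ∫ ω, G ω * μ[Y | m] ω ∂μ = ∫ ω, G ω * Y ω ∂μ :=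
  (integral_congr_ae (condExp_mul_of_stronglyMeasurable_left hG hGY hY)).symm.trans
    (integral_condExp hm)

lemma integral_mul_exp_le_integral_mul_one_add_condExp [IsFiniteMeasure μ] (hm : m ≤ mΩ)
    {G Y : Ω → ℝ} {C b l c : ℝ} (hG : StronglyMeasurable[m] G) (hG0 : ∀ ω, 0 ≤ G ω)
    (hGC : ∀ᵐ ω ∂μ, G ω ≤ C) (hY : Measurable Y) (hYb : ∀ ω, |Y ω| ≤ b)
    (hYm : μ[Y | m] =ᵐ[μ] 0) (hexp : ∀ ω, exp (l * Y ω) ≤ 1 + l * Y ω + c * Y ω ^ 2) :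
    ∫ ω, G ω * exp (l * Y ω) ∂μ ≤ ∫ ω, G ω * (1 + c * μ[fun ω => Y ω ^ 2 | m] ω) ∂μ := by
  set W := μ[fun ω => Y ω ^ 2 | m]
  have hGm : AEStronglyMeasurable G μ := (hG.mono hm).aestronglyMeasurable
  have hGb : ∀ᵐ ω ∂μ, ‖G ω‖ ≤ C := by
    filter_upwards [hGC] with ω h
    rwa [norm_of_nonneg (hG0 ω)]
  have hGi : Integrable G μ := .of_bound hGm C hGb
  have hYi : Integrable Y μ :=
    .of_bound hY.aestronglyMeasurable b (.of_forall fun ω => (norm_eq_abs _).trans_le (hYb ω))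
  have hY2i : Integrable (fun ω => Y ω ^ 2) μ :=
    .of_bound (hY.pow_const 2).aestronglyMeasurable (b ^ 2) (.of_forall fun ω => by
      rw [norm_pow, norm_eq_abs]; exact pow_le_pow_left₀ (abs_nonneg _) (hYb ω) 2)
  have hGYi := hYi.bdd_mul hGm hGb
  have hGY2i := hY2i.bdd_mul hGm hGb
  have hGWi := (integrable_condExp (m := m) (f := fun ω => Y ω ^ 2)).bdd_mul hGm hGb
  have hpoly : Integrable (fun ω => 1 + l * Y ω + c * Y ω ^ 2) μ :=
    ((integrable_const 1).add (hYi.const_mul l)).add (hY2i.const_mul c)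
  have hexpi : Integrable (fun ω => exp (l * Y ω)) μ :=
    hpoly.mono' (measurable_exp.comp (hY.const_mul l)).aestronglyMeasurable
      (.of_forall fun ω => (norm_of_nonneg (exp_pos _).le).trans_le (hexp ω))
  have hGY0 : ∫ ω, G ω * Y ω ∂μ = 0 := by
    rw [← integral_mul_condExp hm hG hGYi hYi]
    exact integral_eq_zero_of_ae (by filter_upwards [hYm] with ω h; simp [h])
  have hGY2 : ∫ ω, G ω * Y ω ^ 2 ∂μ = ∫ ω, G ω * W ω ∂μ :=
    (integral_mul_condExp hm hG hGY2i hY2i).symm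
  calc ∫ ω, G ω * exp (l * Y ω) ∂μ ≤ ∫ ω, G ω * (1 + l * Y ω + c * Y ω ^ 2) ∂μ :=
        integral_mono (hexpi.bdd_mul hGm hGb) (hpoly.bdd_mul hGm hGb)
          fun ω => mul_le_mul_of_nonneg_left (hexp ω) (hG0 ω)
    _ = ∫ ω, G ω ∂μ + l * ∫ ω, G ω * Y ω ∂μ + c * ∫ ω, G ω * Y ω ^ 2 ∂μ := by
        simp_rw [mul_add, mul_one, mul_left_comm (G _)]
        rw [integral_add ?_ (hGY2i.const_mul c), integral_add hGi (hGYi.const_mul l),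
          integral_const_mul, integral_const_mul]
        exact hGi.add (hGYi.const_mul l)
    _ = ∫ ω, G ω * (1 + c * W ω) ∂μ := by
        simp_rw [mul_add, mul_one, mul_left_comm (G _)]
        rw [hGY0, hGY2, integral_add hGi (hGWi.const_mul c), integral_const_mul]
        ring

end ConditionalExpectation

section Martingale

variable {Ω : Type*} {mΩ : MeasurableSpace Ω} {μ : Measure Ω} {F : ℕ → MeasurableSpace Ω}
  {X : ℕ → Ω → ℝ} {n : ℕ} {b : ℝ}

noncomputable def predictableQuadVar (μ : Measure Ω) (F : ℕ → MeasurableSpace Ω)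
    (X : ℕ → Ω → ℝ) (n : ℕ) (ω : Ω) : ℝ :=
  ∑ t ∈ Icc 1 n, μ[fun ω' => X t ω' ^ 2 | F (t - 1)] ω

lemma predictableQuadVar_succ (ω : Ω) : predictableQuadVar μ F X (n + 1) ω =
    predictableQuadVar μ F X n ω + μ[fun ω' => X (n + 1) ω' ^ 2 | F n] ω := by
  simp [predictableQuadVar, sum_Icc_succ_top]

lemma predictableQuadVar_nonneg : ∀ᵐ ω ∂μ, 0 ≤ predictableQuadVar μ F X n ω := by
  have : ∀ᵐ ω ∂μ, ∀ t ∈ Icc 1 n, 0 ≤ μ[fun ω' => X t ω' ^ 2 | F (t - 1)] ω :=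
    (Filter.eventually_all_finset _).2 fun t _ => condExp_nonneg (.of_forall fun ω => sq_nonneg _)
  filter_upwards [this] with ω hω using sum_nonneg hω

lemma predictableQuadVar_le (hXb : ∀ t ∈ Icc 1 n, ∀ ω, |X t ω| ≤ b) :
    ∀ᵐ ω ∂μ, predictableQuadVar μ F X n ω ≤ n * b ^ 2 := by
  have : ∀ᵐ ω ∂μ, ∀ t ∈ Icc 1 n, μ[fun ω' => X t ω' ^ 2 | F (t - 1)] ω ≤ b ^ 2 :=
    (Filter.eventually_all_finset _).2 fun t ht => condExp_le_nonneg_const (sq_nonneg b)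
      (.of_forall fun ω => sq_le_sq' (abs_le.1 (hXb t ht ω)).1 (abs_le.1 (hXb t ht ω)).2)
  filter_upwards [this] with ω hω
  exact (sum_le_sum hω).trans_eq (by simp)

lemma measurable_predictableQuadVar (hF : Monotone F) {k : ℕ} (hnk : n ≤ k + 1) :
    Measurable[F k] (predictableQuadVar μ F X n) :=
  Finset.measurable_sum _ fun t ht =>
    (stronglyMeasurable_condExp.mono (hF (by simp at ht; omega))).measurable

lemma measurable_sum_Icc_of_le (hF : Monotone F) (hX : ∀ t ∈ Icc 1 n, Measurable[F t] (X t))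
    {k : ℕ} (hnk : n ≤ k) : Measurable[F k] (fun ω => ∑ t ∈ Icc 1 n, X t ω) :=
  Finset.measurable_sum _ fun t ht => (hX t ht).mono (hF (by simp at ht; omega)) le_rfl

lemma exp_mul_sum_sub_le (hXb : ∀ t ∈ Icc 1 n, ∀ ω, |X t ω| ≤ b) {l c v : ℝ} (hc : 0 ≤ c)
    (hv : 0 ≤ v) (ω : Ω) : exp (l * ∑ t ∈ Icc 1 n, X t ω - c * v) ≤ exp (|l| * (n * b)) := by
  have hS : |∑ t ∈ Icc 1 n, X t ω| ≤ n * b :=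
    (abs_sum_le_sum_abs _ _).trans ((sum_le_sum fun t ht => hXb t ht ω).trans (by simp))
  refine exp_le_exp.2 ?_
  nlinarith [le_abs_self (l * ∑ t ∈ Icc 1 n, X t ω), abs_mul l (∑ t ∈ Icc 1 n, X t ω),
    mul_le_mul_of_nonneg_left hS (abs_nonneg l), mul_nonneg hc hv]

lemma integrable_exp_mul_sum_sub_predictableQuadVar [IsFiniteMeasure μ] (hF : Monotone F)
    (hFle : ∀ t, F t ≤ mΩ) (hX : ∀ t ∈ Icc 1 n, Measurable[F t] (X t))
    (hXb : ∀ t ∈ Icc 1 n, ∀ ω, |X t ω| ≤ b) {l c : ℝ} (hc : 0 ≤ c) :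
    Integrable (fun ω => exp (l * ∑ t ∈ Icc 1 n, X t ω - c * predictableQuadVar μ F X n ω))
      μ := by
  have hmeas : Measurable[F n] fun ω =>
      l * ∑ t ∈ Icc 1 n, X t ω - c * predictableQuadVar μ F X n ω :=
    ((measurable_sum_Icc_of_le hF hX le_rfl).const_mul l).sub
      ((measurable_predictableQuadVar hF n.le_succ).const_mul c)
  refine .of_bound (measurable_exp.comp (hmeas.mono (hFle n) le_rfl)).aestronglyMeasurable
    (exp (|l| * (n * b))) ?_
  filter_upwards [predictableQuadVar_nonneg] with ω hω
  rw [norm_of_nonneg (exp_pos _).le]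
  exact exp_mul_sum_sub_le hXb hc hω ω

theorem integral_exp_mul_sum_sub_predictableQuadVar_le_one [IsProbabilityMeasure μ]
    (hF : Monotone F) (hFle : ∀ t, F t ≤ mΩ)
    (hX : ∀ t ∈ Icc 1 n, Measurable[F t] (X t))
    (hXc : ∀ t ∈ Icc 1 n, μ[X t | F (t - 1)] =ᵐ[μ] 0)
    (hXb : ∀ t ∈ Icc 1 n, ∀ ω, |X t ω| ≤ b) {l c : ℝ} (hc : 0 ≤ c)
    (hexp : ∀ x, |x| ≤ b → exp (l * x) ≤ 1 + l * x + c * x ^ 2) :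
    ∫ ω, exp (l * ∑ t ∈ Icc 1 n, X t ω - c * predictableQuadVar μ F X n ω) ∂μ ≤ 1 := by
  induction n with
  | zero => simp [predictableQuadVar]
  | succ n ih =>
    have hsub : Icc 1 n ⊆ Icc 1 (n + 1) := Icc_subset_Icc_right n.le_succ
    have hmem : n + 1 ∈ Icc 1 (n + 1) := by simp
    set S := fun ω => ∑ t ∈ Icc 1 n, X t ω
    set W := μ[fun ω' => X (n + 1) ω' ^ 2 | F n]
    -- `Vₙ₊₁` is predictable, so `G` is `F n`-measurable and only `exp (l Xₙ₊₁)` is averaged.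
    set G := fun ω => exp (l * S ω - c * predictableQuadVar μ F X (n + 1) ω)
    have hG : StronglyMeasurable[F n] G := (measurable_exp.comp
      (((measurable_sum_Icc_of_le hF (fun t ht => hX t (hsub ht)) le_rfl).const_mul l).sub
        ((measurable_predictableQuadVar hF le_rfl).const_mul c))).stronglyMeasurable
    have hGC : ∀ᵐ ω ∂μ, G ω ≤ exp (|l| * (n * b)) := by
      filter_upwards [predictableQuadVar_nonneg] with ω hω
      exact exp_mul_sum_sub_le (fun t ht => hXb t (hsub ht)) hc hω ω
    have hstep := integral_mul_exp_le_integral_mul_one_add_condExp (hFle n) hG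
      (fun ω => (exp_pos _).le) hGC ((hX _ hmem).mono (hFle _) le_rfl) (hXb _ hmem)
      (by simpa using hXc _ hmem) (fun ω => hexp _ (hXb _ hmem ω))
    calc _ = ∫ ω, G ω * exp (l * X (n + 1) ω) ∂μ := by
          congr 1 with ω
          rw [sum_Icc_succ_top (by omega), ← exp_add]
          simp only [S]
          ring_nf
      _ ≤ _ := hstep
      _ ≤ ∫ ω, exp (l * S ω - c * predictableQuadVar μ F X n ω) ∂μ := by
          refine integral_mono_of_nonneg ?_
            (integrable_exp_mul_sum_sub_predictableQuadVar hF hFle (fun t ht => hX t (hsub ht))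
              (fun t ht => hXb t (hsub ht)) hc) (.of_forall fun ω => ?_)
          · filter_upwards [condExp_nonneg (m := F n) (μ := μ)
              (.of_forall fun ω => sq_nonneg (X (n + 1) ω))] with ω hω
            rw [Pi.zero_apply] at hω
            exact mul_nonneg (exp_pos _).le (by nlinarith)
          calc G ω * (1 + c * W ω) ≤ G ω * exp (c * W ω) := by
                gcongr; linarith [add_one_le_exp (c * W ω)]
            _ = _ := by
                simp only [G, W, ← exp_add, predictableQuadVar_succ]
                ring_nf
      _ ≤ 1 := ih (fun t ht => hX t (hsub ht)) (fun t ht => hXc t (hsub ht))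
          (fun t ht => hXb t (hsub ht))

end Martingale

section Probability

variable {Ω : Type*} {mΩ : MeasurableSpace Ω} {μ : Measure Ω} [IsProbabilityMeasure μ]

lemma one_sub_le_measureReal_of_compl_le {s : Set Ω} {δ : ℝ}
    (h : μ.real sᶜ ≤ δ) : 1 - δ ≤ μ.real s := by
  have := measureReal_union_le (μ := μ) s sᶜ
  rw [Set.union_compl_self, probReal_univ] at this
  linarith

lemma measureReal_le_le_div_of_integral_eq_zero {Y : Ω → ℝ} {a b : ℝ}
    (hY : Integrable Y μ) (hY0 : ∫ ω, Y ω ∂μ = 0) (hYb : ∀ᵐ ω ∂μ, -b ≤ Y ω) (hab : 0 < a + b) :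
    μ.real {ω | a ≤ Y ω} ≤ b / (a + b) := by
  have h := mul_meas_ge_le_integral_of_nonneg (f := fun ω => Y ω + b)
    (by filter_upwards [hYb] with ω h; simp only [Pi.zero_apply]; linarith)
    (hY.add (integrable_const b)) (a + b)
  simp only [add_le_add_iff_right, integral_add hY (integrable_const b), hY0, integral_const,
    probReal_univ, smul_eq_mul, one_mul, zero_add] at h
  rwa [le_div_iff₀ hab, mul_comm]

lemma measureReal_sqrt_lt_le_inv {Y V : Ω → ℝ} {b L : ℝ}
    (hY : Integrable Y μ) (hY0 : ∫ ω, Y ω ∂μ = 0) (hYb : ∀ ω, |Y ω| ≤ b) (hb : 0 < b)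
    (hV : ∀ᵐ ω ∂μ, 0 ≤ V ω) (hL : 0 ≤ L) :
    μ.real {ω | √(4 * V ω * L + 5 * b ^ 2 * L ^ 2) < Y ω} ≤ (1 + √5 * L)⁻¹ := by
  have hsub :
      {ω | √(4 * V ω * L + 5 * b ^ 2 * L ^ 2) < Y ω} ≤ᵐ[μ] {ω | b * (√5 * L) ≤ Y ω} := by
    filter_upwards [hV] with ω hω hlt
    refine le_of_lt (lt_of_le_of_lt ?_ hlt)
    calc b * (√5 * L) = √(5 * b ^ 2 * L ^ 2) := by
          rw [show 5 * b ^ 2 * L ^ 2 = (b * L) ^ 2 * 5 by ring, sqrt_mul (sq_nonneg _),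
            sqrt_sq (by positivity)]
          ring
      _ ≤ _ := sqrt_le_sqrt (by nlinarith [mul_nonneg hω hL])
  calc _ ≤ μ.real {ω | b * (√5 * L) ≤ Y ω} :=
        ENNReal.toReal_mono (measure_ne_top _ _) (measure_mono_ae hsub)
    _ ≤ b / (b * (√5 * L) + b) := measureReal_le_le_div_of_integral_eq_zero hY hY0
        (.of_forall fun ω => neg_le_of_abs_le (hYb ω)) (by positivity)
    _ = (1 + √5 * L)⁻¹ := by field_simp; ring

end Probability

section Freedman

variable {Ω : Type*} {mΩ : MeasurableSpace Ω} {μ : Measure Ω} [IsProbabilityMeasure μ]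
  {F : ℕ → MeasurableSpace Ω} {X : ℕ → Ω → ℝ} {n : ℕ} {b : ℝ}

lemma measureReal_le_mul_sum_sub_le_exp_neg (hF : Monotone F) (hFle : ∀ t, F t ≤ mΩ)
    (hX : ∀ t ∈ Icc 1 n, Measurable[F t] (X t))
    (hXc : ∀ t ∈ Icc 1 n, μ[X t | F (t - 1)] =ᵐ[μ] 0)
    (hXb : ∀ t ∈ Icc 1 n, ∀ ω, |X t ω| ≤ b) (hb : 0 < b) {lam : ℝ} (hlam : 0 ≤ lam) (L : ℝ) :
    μ.real {ω | L ≤ lam / b * ∑ t ∈ Icc 1 n, X t ω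
      - expRem lam / b ^ 2 * predictableQuadVar μ F X n ω} ≤ exp (-L) := by
  have hc : 0 ≤ expRem lam / b ^ 2 := div_nonneg (expRem_nonneg lam) (sq_nonneg b)
  have hexp : ∀ x, |x| ≤ b →
      exp (lam / b * x) ≤ 1 + lam / b * x + expRem lam / b ^ 2 * x ^ 2 := fun x hx => by
      simpa [div_mul_cancel₀ lam hb.ne'] using
        exp_mul_le_one_add_add_expRem_mul_sq (div_nonneg hlam hb.le) hb hx
  calc _ ≤ exp (-1 * L) * mgf (fun ω => lam / b * ∑ t ∈ Icc 1 n, X t ω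
        - expRem lam / b ^ 2 * predictableQuadVar μ F X n ω) μ 1 :=
        measure_ge_le_exp_mul_mgf L zero_le_one
          (by simpa using integrable_exp_mul_sum_sub_predictableQuadVar hF hFle hX hXb hc)
    _ ≤ exp (-L) * 1 := by
        rw [neg_one_mul]
        gcongr
        simpa [mgf] using
          integral_exp_mul_sum_sub_predictableQuadVar_le_one hF hFle hX hXc hXb hc hexp
    _ = exp (-L) := mul_one _

lemma measureReal_sqrt_lt_sum_le (hF : Monotone F) (hFle : ∀ t, F t ≤ mΩ)
    (hX : ∀ t ∈ Icc 1 n, Measurable[F t] (X t))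
    (hXc : ∀ t ∈ Icc 1 n, μ[X t | F (t - 1)] =ᵐ[μ] 0)
    (hXb : ∀ t ∈ Icc 1 n, ∀ ω, |X t ω| ≤ b) (hb : 0 < b) (hn : 0 < n) {L : ℝ}
    (hL : 3 / 10 ≤ L) :
    μ.real {ω | √(4 * predictableQuadVar μ F X n ω * L + 5 * b ^ 2 * L ^ 2)
      < ∑ t ∈ Icc 1 n, X t ω} ≤ n * exp (-L) := by
  set A : ℕ → Set Ω := fun k => {ω | L ≤ bucketRate L k / b * ∑ t ∈ Icc 1 n, X t ω
      - expRem (bucketRate L k) / b ^ 2 * predictableQuadVar μ F X n ω}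
  have hsub : {ω | √(4 * predictableQuadVar μ F X n ω * L + 5 * b ^ 2 * L ^ 2)
      < ∑ t ∈ Icc 1 n, X t ω} ≤ᵐ[μ] ⋃ k ∈ range n, A k := by
    filter_upwards [predictableQuadVar_nonneg, predictableQuadVar_le hXb] with ω hV0 hVn hlt
    set V := predictableQuadVar μ F X n ω
    set S := ∑ t ∈ Icc 1 n, X t ω
    obtain ⟨k, hk, hkU, hUk⟩ := exists_nat_le_le_add_one hn (U := V / b ^ 2) (by positivity)
      (by rwa [div_le_iff₀ (by positivity)])
    have hy : √(4 * (V / b ^ 2) * L + 5 * L ^ 2) ≤ S / b := by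
      rw [show 4 * (V / b ^ 2) * L + 5 * L ^ 2 = (4 * V * L + 5 * b ^ 2 * L ^ 2) / b ^ 2 by
        field_simp, sqrt_div' _ (sq_nonneg b), sqrt_sq hb.le]
      exact div_le_div_of_nonneg_right hlt.le hb.le
    refine Set.mem_biUnion (mem_range.2 hk) ?_
    have := le_bucketRate_mul_sub hL hkU hUk hy
    simp only [A, Set.mem_ofPred_eq]
    convert this using 2 <;> ring
  calc _ ≤ μ.real (⋃ k ∈ range n, A k) :=
        ENNReal.toReal_mono (measure_ne_top _ _) (measure_mono_ae hsub)
    _ ≤ ∑ k ∈ range n, μ.real (A k) := measureReal_biUnion_finset_le _ _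
    _ ≤ ∑ k ∈ range n, exp (-L) := sum_le_sum fun k _ =>
        measureReal_le_mul_sum_sub_le_exp_neg hF hFle hX hXc hXb hb
          (bucketRate_pos (by linarith) k).le L
    _ = n * exp (-L) := by simp

end Freedman

theorem stmt_5 {Ω : Type*} [MeasureSpace Ω] [IsProbabilityMeasure (ℙ : Measure Ω)]
    (n : ℕ) (F : ℕ → MeasurableSpace Ω) (hFmono : Monotone F)
    (hFle : ∀ t, F t ≤ (MeasureSpace.toMeasurableSpace : MeasurableSpace Ω))
    (X : ℕ → Ω → ℝ) (b : ℝ) (hb : 0 < b)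
    (hXmeas : ∀ t ∈ Finset.Icc 1 n, Measurable[F t] (X t))
    (hcond : ∀ t ∈ Finset.Icc 1 n, ℙ[X t | F (t - 1)] =ᵐ[ℙ] 0)
    (hXbdd : ∀ t ∈ Finset.Icc 1 n, ∀ ω, |X t ω| ≤ b)
    (Vn : Ω → ℝ)
    (hVn : Vn = fun ω => ∑ t ∈ Finset.Icc 1 n, (ℙ[fun ω' => (X t ω') ^ 2 | F (t - 1)]) ω)
    (δ : ℝ) (hδ : 0 < δ) :
    1 - δ ≤ (ℙ {ω | ∑ t ∈ Finset.Icc 1 n, X t ω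
        ≤ Real.sqrt (4 * Vn ω * Real.log (n / δ)
            + 5 * b ^ 2 * (Real.log (n / δ)) ^ 2)}).toReal := by
  rw [show Vn = predictableQuadVar ℙ F X n from hVn]
  rcases le_or_gt 1 δ with hδ1 | hδ1
  · exact (sub_nonpos.2 hδ1).trans ENNReal.toReal_nonneg
  rcases Nat.eq_zero_or_pos n with rfl | hn
  · simpa using hδ.le
  refine one_sub_le_measureReal_of_compl_le ?_
  simp only [Set.compl_ofPred, not_le]
  set L := log (n / δ)
  have hexpL : exp (-L) = δ / n := by rw [exp_neg, exp_log (by positivity), inv_div]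
  rcases lt_or_ge L (3 / 10) with hL | hL
  · obtain rfl : n = 1 := by
      by_contra hn1
      have h2 : (2 : ℝ) ≤ n / δ := by
        rw [le_div_iff₀ hδ]
        nlinarith [show (2 : ℝ) ≤ n by exact_mod_cast (by omega : 2 ≤ n)]
      linarith [log_le_log two_pos h2, log_two_gt_d9]
    have hL0 : 0 ≤ L := log_nonneg (by rw [Nat.cast_one, one_le_div hδ]; exact hδ1.le)
    have hX1 : Measurable (X 1) := (hXmeas 1 (by simp)).mono (hFle 1) le_rfl
    have hmean : ∫ ω, X 1 ω = 0 := by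
      rw [← integral_condExp (hFle 0)]
      exact integral_eq_zero_of_ae (hcond 1 (by simp))
    simp only [Icc_self, sum_singleton]
    calc _ ≤ (1 + √5 * L)⁻¹ := measureReal_sqrt_lt_le_inv
          (.of_bound hX1.aestronglyMeasurable b (.of_forall (hXbdd 1 (by simp))))
          hmean (hXbdd 1 (by simp)) hb predictableQuadVar_nonneg hL0
      _ ≤ exp (-L) := inv_one_add_sqrt_five_mul_le_exp_neg hL0 (by linarith)
      _ = δ := by simp [hexpL]
  · calc _ ≤ n * exp (-L) :=
          measureReal_sqrt_lt_sum_le hFmono hFle hXmeas hcond hXbdd hb hn hL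
      _ = δ := by rw [hexpL]; field_simp
end
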